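/- Let m ≥ 2, let C be a linear code over ℤ/mℤ of length n with dual code C^⊥, let ρ : ℤ^n → (ℤ/mℤ)^n be componentwise reduction mod m, and for y ∈ ℤ, t ∈ ℂ set A_y(t) = (1/m) Σ_{j=0}^{m−1} exp(t cos(2πj/m)) e^{2πi y j/m}. Then for every t ∈ ℂ and x = (x_1,…,x_n) ∈ ℤ^n: cwe_{ρ(x)+C}(mA_0(t),…, mA_{m−1}(t)) = #C · Σ_{c=(c_j)∈C^⊥} ∏_{j=1}^n e^{t cos(2πc_j/m)} e^{2πi x_j c_j/m}. In particular, for every t ∈ ℂ and x ∈ ℤ, with ι : ℝ → ℝ^n the diagonal embedding: cwe_{ρ(ι(x))+C}(mA_0(t),…, mA_{m−1}(t)) = #C · cwe_{C^⊥}(e^{t cos(2π·0/m)} e^{2πi x·0/m}, …, e^{t cos(2π(m−1)/m)} e^{2πi x(m−1)/m}). -/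
import Mathlib


open scoped Real
open Complex

/-- `A_y(t) = (1/m) Σ_{j=0}^{m−1} exp(t cos(2πj/m)) e^{2πi y j/m}`. -/
noncomputable def Aseq (m : ℕ) (y : ℤ) (t : ℂ) : ℂ :=
  (m : ℂ)⁻¹ * ∑ j ∈ Finset.range m,
    Complex.exp (t * Real.cos (2 * Real.pi * (j : ℝ) / (m : ℝ))) *
      Complex.exp (2 * Real.pi * I * (y : ℝ) * (j : ℝ) / (m : ℝ))

/-- `n_ℓ(c)`: the number of components of `c` equal to `ℓ` mod `m`. -/
noncomputable def nComp {m n : ℕ} (c : Fin n → ZMod m) (ℓ : ℕ) : ℕ :=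
  Nat.card {j : Fin n // c j = (ℓ : ZMod m)}

/-- The complete weight enumerator of a subset `B ⊆ (ℤ/mℤ)^n`,
`cwe_B(X_0,…,X_{m−1}) = Σ_{c∈B} ∏_{ℓ=0}^{m−1} X_ℓ^{n_ℓ(c)}`. -/
noncomputable def cwe {m n : ℕ} (B : Set (Fin n → ZMod m)) (X : ℕ → ℂ) : ℂ :=
  ∑' c : B, ∏ ℓ ∈ Finset.range m, X ℓ ^ nComp (c : Fin n → ZMod m) ℓ

/-- The dual code `C^⊥ = {v : x·y = 0 for all y ∈ C}`. -/
def dualCode {m n : ℕ} (C : Submodule (ZMod m) (Fin n → ZMod m)) :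
    Set (Fin n → ZMod m) :=
  {v | ∀ c ∈ C, ∑ i, v i * c i = 0}

section aux
variable {m n : ℕ} [NeZero m]

lemma prod_pow_nComp (c : Fin n → ZMod m) (X : ℕ → ℂ) :
    ∏ ℓ ∈ Finset.range m, X ℓ ^ nComp c ℓ = ∏ j, X ((c j).val) := by
  classical
  have h : ∀ j ∈ (Finset.univ : Finset (Fin n)), (c j).val ∈ Finset.range m :=
    fun j _ => Finset.mem_range.2 ((c j).val_lt)
  rw [← Finset.prod_fiberwise_of_maps_to' h (fun ℓ => X ℓ)]
  refine Finset.prod_congr rfl fun ℓ hℓ => ?_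
  rw [Finset.prod_const]
  congr 1
  rw [nComp, Nat.card_eq_fintype_card, Fintype.card_subtype]
  congr 1
  ext j
  simp only [Finset.mem_filter, Finset.mem_univ, true_and]
  constructor
  · intro hcj; rw [hcj, ZMod.val_cast_of_lt (Finset.mem_range.1 hℓ)]
  · intro hv; rw [← hv, ZMod.natCast_zmod_val]

lemma addChar_map_sum {A M : Type*} [AddCommMonoid A] [CommMonoid M] (ψ : AddChar A M)
    {ι : Type*} (s : Finset ι) (f : ι → A) : ψ (∑ i ∈ s, f i) = ∏ i ∈ s, ψ (f i) := by
  induction s using Finset.cons_induction with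
  | empty => simp
  | cons a s ha ih => rw [Finset.sum_cons, Finset.prod_cons, AddChar.map_add_eq_mul, ih]

lemma stdAddChar_int_mul (k : ℤ) (a : ZMod m) :
    ZMod.stdAddChar ((k : ZMod m) * a)
      = Complex.exp (2 * Real.pi * Complex.I * ((k : ℝ) : ℂ) * ((a.val : ℝ) : ℂ) / ((m : ℝ) : ℂ)) := by
  have h1 : ((k * (a.val : ℤ) : ℤ) : ZMod m) = (k : ZMod m) * a := by
    push_cast [ZMod.natCast_zmod_val]; ring
  rw [← h1, ZMod.stdAddChar_coe]
  congr 1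
  push_cast
  ring

lemma m_mul_Aseq (ℓ : ℤ) (t : ℂ) :
    (m : ℂ) * Aseq m ℓ t
      = ∑ b : ZMod m,
          Complex.exp (t * Real.cos (2 * Real.pi * (b.val : ℝ) / (m : ℝ))) *
            ZMod.stdAddChar ((ℓ : ZMod m) * b) := by
  have hm : (m : ℂ) ≠ 0 := Nat.cast_ne_zero.2 (NeZero.ne m)
  rw [Aseq, ← mul_assoc, mul_inv_cancel₀ hm, one_mul]
  refine Finset.sum_nbij' (i := fun j => (j : ZMod m)) (j := fun b => b.val) ?_ ?_ ?_ ?_ ?_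
  · intro j _; exact Finset.mem_univ _
  · intro b _; exact Finset.mem_range.2 b.val_lt
  · intro j hj; exact ZMod.val_cast_of_lt (Finset.mem_range.1 hj)
  · intro b _; exact ZMod.natCast_zmod_val b
  · intro j hj
    rw [stdAddChar_int_mul, ZMod.val_cast_of_lt (Finset.mem_range.1 hj)]

lemma char_sum_code (C : Submodule (ZMod m) (Fin n → ZMod m)) [Fintype C]
    (v : Fin n → ZMod m) [Decidable (v ∈ dualCode C)] :
    ∑ c : C, (ZMod.stdAddChar (∑ i, v i * (c : Fin n → ZMod m) i) : ℂ)
      = if v ∈ dualCode C then (Nat.card C : ℂ) else 0 := by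
  classical
  by_cases hv : v ∈ dualCode C
  · rw [if_pos hv]
    have h1 : ∀ c : C, (ZMod.stdAddChar (∑ i, v i * (c : Fin n → ZMod m) i) : ℂ) = 1 := by
      intro c; rw [hv _ c.2, AddChar.map_zero_eq_one]
    rw [Finset.sum_congr rfl fun c _ => h1 c, Finset.sum_const, Nat.card_eq_fintype_card]
    simp
  · rw [if_neg hv]
    let φ : C →+ ZMod m :=
      { toFun := fun c => ∑ i, v i * (c : Fin n → ZMod m) i
        map_zero' := by simp
        map_add' := by
          intro a b
          simp [mul_add, Finset.sum_add_distrib] }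
    let χ : AddChar C ℂ := (ZMod.stdAddChar (N := m)).compAddMonoidHom φ
    have hχ : χ ≠ 1 := by
      rw [AddChar.ne_one_iff]
      simp only [dualCode, Set.mem_setOf_eq, not_forall] at hv
      obtain ⟨c, hc, hne⟩ := hv
      refine ⟨⟨c, hc⟩, fun h => hne ?_⟩
      have h0 : (ZMod.stdAddChar (0 : ZMod m) : ℂ) = 1 := AddChar.map_zero_eq_one _
      exact ZMod.injective_stdAddChar (h.trans h0.symm)
    have hz := AddChar.sum_eq_zero_of_ne_one hχ
    simpa [χ, φ] using hz

lemma core (C : Submodule (ZMod m) (Fin n → ZMod m)) (t : ℂ) (x : Fin n → ℤ) :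
    cwe ((fun c => (fun i => ((x i : ZMod m))) + c) '' (C : Set (Fin n → ZMod m)))
        (fun ℓ => (m : ℂ) * Aseq m (ℓ : ℤ) t) =
      (Nat.card C : ℂ) * ∑' v : dualCode C, ∏ j,
          (Complex.exp (t * Real.cos (2 * Real.pi *
              (((v : Fin n → ZMod m) j).val : ℝ) / (m : ℝ))) *
            ZMod.stdAddChar ((x j : ZMod m) * (v : Fin n → ZMod m) j)) := by
  classical
  haveI : Fintype C := Fintype.ofFinite _
  haveI : Fintype (dualCode C) := Fintype.ofFinite _
  have hinj : Function.Injective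
      (fun c : Fin n → ZMod m => (fun i => ((x i : ZMod m))) + c) :=
    fun a b h => by simpa using h
  let e : C ≃ ((fun c => (fun i => ((x i : ZMod m))) + c) '' (C : Set (Fin n → ZMod m))) :=
    (Equiv.subtypeEquivRight fun z => Iff.rfl).trans
      (Equiv.Set.image _ (C : Set (Fin n → ZMod m)) hinj)
  have hecoe : ∀ a : C,
      ((e a : Fin n → ZMod m)) = (fun i => ((x i : ZMod m))) + (a : Fin n → ZMod m) :=
    fun a => rfl
  rw [cwe, ← Equiv.tsum_eq e, tsum_fintype, tsum_fintype]
  have hstep1 : ∀ w : Fin n → ZMod m,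
      (∏ ℓ ∈ Finset.range m, ((m : ℂ) * Aseq m (ℓ : ℤ) t) ^ nComp w ℓ)
        = ∑ v : Fin n → ZMod m, ∏ j,
            (Complex.exp (t * Real.cos (2 * Real.pi * ((v j).val : ℝ) / (m : ℝ))) *
              ZMod.stdAddChar (w j * v j)) := by
    intro w
    rw [prod_pow_nComp w (fun ℓ => (m : ℂ) * Aseq m (ℓ : ℤ) t)]
    have h1 : ∀ j : Fin n, (m : ℂ) * Aseq m (((w j).val : ℕ) : ℤ) t
        = ∑ b : ZMod m,
            Complex.exp (t * Real.cos (2 * Real.pi * ((b).val : ℝ) / (m : ℝ))) *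
              ZMod.stdAddChar (w j * b) := by
      intro j
      rw [m_mul_Aseq]
      refine Finset.sum_congr rfl fun b _ => ?_
      congr 2
      push_cast [ZMod.natCast_zmod_val]
      ring
    rw [Finset.prod_congr rfl fun j _ => h1 j, Finset.prod_univ_sum, Fintype.piFinset_univ]
  have hterm : ∀ (c v : Fin n → ZMod m),
      (∏ j, (Complex.exp (t * Real.cos (2 * Real.pi * ((v j).val : ℝ) / (m : ℝ))) *
          ZMod.stdAddChar (((fun i => ((x i : ZMod m))) + c) j * v j)))
        = (∏ j, (Complex.exp (t * Real.cos (2 * Real.pi * ((v j).val : ℝ) / (m : ℝ))) *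
            ZMod.stdAddChar ((x j : ZMod m) * v j))) *
          ZMod.stdAddChar (∑ j, v j * c j) := by
    intro c v
    rw [addChar_map_sum, ← Finset.prod_mul_distrib]
    refine Finset.prod_congr rfl fun j _ => ?_
    have : ((fun i => ((x i : ZMod m))) + c) j * v j
        = (x j : ZMod m) * v j + c j * v j := by
      simp [add_mul]
    rw [this, AddChar.map_add_eq_mul, mul_comm (v j) (c j)]
    ring
  calc ∑ a : C, ∏ ℓ ∈ Finset.range m,
        ((m : ℂ) * Aseq m (ℓ : ℤ) t) ^ nComp ((e a : Fin n → ZMod m)) ℓ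
      = ∑ a : C, ∑ v : Fin n → ZMod m,
          ((∏ j, (Complex.exp (t * Real.cos (2 * Real.pi * ((v j).val : ℝ) / (m : ℝ))) *
            ZMod.stdAddChar ((x j : ZMod m) * v j))) *
            ZMod.stdAddChar (∑ j, v j * (a : Fin n → ZMod m) j)) := by
        refine Finset.sum_congr rfl fun a _ => ?_
        rw [hecoe a, hstep1]
        exact Finset.sum_congr rfl fun v _ => hterm _ v
    _ = ∑ v : Fin n → ZMod m,
          ((∏ j, (Complex.exp (t * Real.cos (2 * Real.pi * ((v j).val : ℝ) / (m : ℝ))) *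
            ZMod.stdAddChar ((x j : ZMod m) * v j))) *
            ∑ a : C, ZMod.stdAddChar (∑ j, v j * (a : Fin n → ZMod m) j)) := by
        rw [Finset.sum_comm]
        exact Finset.sum_congr rfl fun v _ => (Finset.mul_sum _ _ _).symm
    _ = ∑ v : Fin n → ZMod m,
          (if v ∈ dualCode C then
            ((Nat.card C : ℂ) * ∏ j,
              (Complex.exp (t * Real.cos (2 * Real.pi * ((v j).val : ℝ) / (m : ℝ))) *
              ZMod.stdAddChar ((x j : ZMod m) * v j)))
           else 0) := by
        refine Finset.sum_congr rfl fun v _ => ?_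
        rw [char_sum_code C v]
        split_ifs <;> ring
    _ = (Nat.card C : ℂ) * ∑ v : dualCode C, ∏ j,
          (Complex.exp (t * Real.cos (2 * Real.pi *
              (((v : Fin n → ZMod m) j).val : ℝ) / (m : ℝ))) *
            ZMod.stdAddChar ((x j : ZMod m) * (v : Fin n → ZMod m) j)) := by
        rw [← Finset.sum_filter]
        rw [Finset.sum_subtype (p := (· ∈ dualCode C)) _ (fun v => by simp)
            (fun v => (Nat.card C : ℂ) * ∏ j,
              (Complex.exp (t * Real.cos (2 * Real.pi * ((v j).val : ℝ) / (m : ℝ))) *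
              ZMod.stdAddChar ((x j : ZMod m) * v j)))]
        rw [← Finset.mul_sum]

end aux

/-- Theorem 4.3 of the paper: for a linear code `C` over `ℤ/mℤ` of
length `n` with dual code `C^⊥`, for every `t ∈ ℂ` and `x ∈ ℤ^n`:
`cwe_{ρ(x)+C}(mA_0(t),…,mA_{m−1}(t)) = #C Σ_{c∈C^⊥} ∏_j e^{t cos(2πc_j/m)} e^{2πi x_j c_j/m}`;
and for every `t ∈ ℂ` and `x ∈ ℤ` (with `ι` the diagonal embedding):
`cwe_{ρ(ι(x))+C}(mA_0(t),…,mA_{m−1}(t))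
  = #C ⋅ cwe_{C^⊥}(e^{t cos(2π·0/m)}e^{2πi x·0/m},…,e^{t cos(2π(m−1)/m)}e^{2πi x(m−1)/m})`. -/
theorem cwe_macwilliams_type_identity (m n : ℕ) (hm : 2 ≤ m)
    (C : Submodule (ZMod m) (Fin n → ZMod m)) :
    (∀ (t : ℂ) (x : Fin n → ℤ),
      cwe ((fun c => (fun i => ((x i : ZMod m))) + c) '' (C : Set (Fin n → ZMod m)))
          (fun ℓ => (m : ℂ) * Aseq m (ℓ : ℤ) t) =
        (Nat.card C : ℂ) *
          ∑' c : dualCode C,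
            ∏ j, Complex.exp (t * Real.cos (2 * Real.pi *
                (((c : Fin n → ZMod m) j).val : ℝ) / (m : ℝ))) *
              Complex.exp (2 * Real.pi * I * (x j : ℝ) *
                (((c : Fin n → ZMod m) j).val : ℝ) / (m : ℝ))) ∧
    (∀ (t : ℂ) (x : ℤ),
      cwe ((fun c => (fun _ => ((x : ZMod m))) + c) '' (C : Set (Fin n → ZMod m)))
          (fun ℓ => (m : ℂ) * Aseq m (ℓ : ℤ) t) =
        (Nat.card C : ℂ) *
          cwe (dualCode C)
            (fun ℓ => Complex.exp (t * Real.cos (2 * Real.pi * (ℓ : ℝ) / (m : ℝ))) *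
              Complex.exp (2 * Real.pi * I * (x : ℝ) * (ℓ : ℝ) / (m : ℝ)))) := by
  haveI : NeZero m := ⟨by omega⟩
  classical
  constructor
  · intro t x
    rw [core C t x]
    congr 1
    refine tsum_congr fun v => Finset.prod_congr rfl fun j _ => ?_
    rw [stdAddChar_int_mul]
  · intro t x
    have h2 :
        cwe ((fun c => (fun _ => ((x : ZMod m))) + c) '' (C : Set (Fin n → ZMod m)))
            (fun ℓ => (m : ℂ) * Aseq m (ℓ : ℤ) t) =
          (Nat.card C : ℂ) * ∑' v : dualCode C, ∏ j,
            (Complex.exp (t * Real.cos (2 * Real.pi *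
                (((v : Fin n → ZMod m) j).val : ℝ) / (m : ℝ))) *
              ZMod.stdAddChar ((x : ZMod m) * (v : Fin n → ZMod m) j)) :=
      core C t (fun _ => x)
    rw [h2, cwe]
    congr 1
    refine tsum_congr fun v => ?_
    rw [prod_pow_nComp ((v : Fin n → ZMod m))
      (fun ℓ => Complex.exp (t * Real.cos (2 * Real.pi * (ℓ : ℝ) / (m : ℝ))) *
        Complex.exp (2 * Real.pi * I * (x : ℝ) * (ℓ : ℝ) / (m : ℝ)))]
    refine Finset.prod_congr rfl fun j _ => ?_
    rw [stdAddChar_int_mul]
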